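/- Let c : ℕ³ → ℝ satisfy: 1 ≤ c(i) for all i; c(i) < c(i') whenever i ≤ i' componentwise and i ≠ i'; and for every k ∈ ℕ³ there exists M_k > 0 such that |c(i) − c(i')| ≤ M_k whenever |i_t − i'_t| ≤ k_t for t = 1,2,3. Define the linear operator D : V → V by Dξ = c(n) ξ for ξ ∈ H_n. Let T be a bounded operator on H and k ∈ ℕ³ be such that for every n ∈ ℕ³, T(H_n) is contained in the (finite) sum of the subspaces H_i over those i ∈ ℕ³ with |i_t − n_t| ≤ k_t for t = 1,2,3. Then for every n ∈ ℕ³ and every ξ ∈ H_n one has ‖D(Tξ) − T(Dξ)‖ ≤ M_k · ‖T‖ · ‖ξ‖, and there exists a bounded operator S on H with Sξ = D(Tξ) − T(Dξ) for every ξ ∈ V. -/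

import Mathlib

/-
On `H n` the commutator is `ξ ↦ D (T ξ) - c n • T ξ`, and `T ξ` lies in the orthogonal sum of the
`H i` with `i` in the `k`-band around `n`, where `D - c n` acts diagonally with entries bounded by
`M k`. To bound the commutator on all of `V`, colour `ℕ³` by residues modulo `2k + 1` in each
coordinate: distinct indices of one colour have disjoint `k`-bands, so the commutator sends the
components of `ξ ∈ V` of one colour to mutually orthogonal vectors. Summing over the finitely many
colours bounds it on the dense subspace `V`, so it extends to `H`.
-/

open Submodule
open scoped ComplexInnerProductSpace

def Near3 (k i i' : ℕ × ℕ × ℕ) : Prop :=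
  |(i.1 : ℤ) - (i'.1 : ℤ)| ≤ (k.1 : ℤ) ∧ |(i.2.1 : ℤ) - (i'.2.1 : ℤ)| ≤ (k.2.1 : ℤ) ∧
    |(i.2.2 : ℤ) - (i'.2.2 : ℤ)| ≤ (k.2.2 : ℤ)

open scoped InnerProductSpace

section Pythagoras

variable {𝕜 E ι : Type*} [RCLike 𝕜] [NormedAddCommGroup E] [InnerProductSpace 𝕜 E]

theorem norm_sum_sq_of_pairwise_inner_eq_zero {s : Finset ι} {f : ι → E}
    (h : (s : Set ι).Pairwise fun i j => ⟪f i, f j⟫_𝕜 = 0) :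
    ‖∑ i ∈ s, f i‖ ^ 2 = ∑ i ∈ s, ‖f i‖ ^ 2 := by
  classical
  induction s using Finset.induction_on with
  | empty => simp
  | insert a s ha ih =>
    have hperp : ⟪f a, ∑ i ∈ s, f i⟫_𝕜 = 0 := by
      rw [inner_sum]
      exact Finset.sum_eq_zero fun j hj =>
        h (by simp) (by simp [hj]) (ne_of_mem_of_not_mem hj ha).symm
    rw [Finset.sum_insert ha, Finset.sum_insert ha, sq, sq,
      norm_add_sq_eq_norm_sq_add_norm_sq_of_inner_eq_zero _ _ hperp, ← sq, ← sq,
      ih (h.mono (by simp))]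

theorem norm_sum_le_of_pairwise_inner_eq_zero {s t : Finset ι} (hts : t ⊆ s) {f g : ι → E}
    {C : ℝ} (hC : 0 ≤ C) (hf : (s : Set ι).Pairwise fun i j => ⟪f i, f j⟫_𝕜 = 0)
    (hg : (t : Set ι).Pairwise fun i j => ⟪g i, g j⟫_𝕜 = 0)
    (hfg : ∀ i ∈ t, ‖g i‖ ≤ C * ‖f i‖) :
    ‖∑ i ∈ t, g i‖ ≤ C * ‖∑ i ∈ s, f i‖ := by
  refine (sq_le_sq₀ (norm_nonneg _) (by positivity)).mp ?_
  calc ‖∑ i ∈ t, g i‖ ^ 2 = ∑ i ∈ t, ‖g i‖ ^ 2 := norm_sum_sq_of_pairwise_inner_eq_zero hg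
    _ ≤ ∑ i ∈ t, C ^ 2 * ‖f i‖ ^ 2 := Finset.sum_le_sum fun i hi => by
        rw [← mul_pow]; exact pow_le_pow_left₀ (norm_nonneg _) (hfg i hi) 2
    _ ≤ ∑ i ∈ s, C ^ 2 * ‖f i‖ ^ 2 :=
        Finset.sum_le_sum_of_subset_of_nonneg hts fun _ _ _ => by positivity
    _ = (C * ‖∑ i ∈ s, f i‖) ^ 2 := by
        rw [mul_pow, norm_sum_sq_of_pairwise_inner_eq_zero hf, Finset.mul_sum]

end Pythagoras

theorem LinearMap.exists_continuousLinearMap_eq_of_norm_le_on_dense {𝕜 E F : Type*} [RCLike 𝕜]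
    [NormedAddCommGroup E] [NormedSpace 𝕜 E] [NormedAddCommGroup F] [NormedSpace 𝕜 F]
    [CompleteSpace F] {V : Submodule 𝕜 E} (hV : Dense (V : Set E)) (L : E →ₗ[𝕜] F) {C : ℝ}
    (hL : ∀ x ∈ V, ‖L x‖ ≤ C * ‖x‖) : ∃ S : E →L[𝕜] F, ∀ x ∈ V, S x = L x :=
  ⟨(L ∘ₗ V.subtype).extendOfNorm V.subtype, fun x hx =>
    LinearMap.extendOfNorm_eq (f := L ∘ₗ V.subtype) (e := V.subtype) hV.denseRange_val
      ⟨C, fun y => hL y y.2⟩ ⟨x, hx⟩⟩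

namespace Submodule

variable {𝕜 E ι : Type*} [RCLike 𝕜] [NormedAddCommGroup E] [InnerProductSpace 𝕜 E]
  {Hn : ι → Submodule 𝕜 E}

theorem exists_finset_sum_eq_of_mem_biSup {A : Set ι} {x : E} (hx : x ∈ ⨆ i ∈ A, Hn i) :
    ∃ (s : Finset ι) (f : ι → E), (∀ i ∈ s, i ∈ A ∧ f i ∈ Hn i) ∧ ∑ i ∈ s, f i = x := by
  classical
  rw [iSup_subtype'] at hx
  obtain ⟨f, hf, rfl⟩ := (mem_iSup_iff_exists_finsupp _ _).mp hx
  refine ⟨f.support.map (Function.Embedding.subtype _),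
    fun i => if h : i ∈ A then f ⟨i, h⟩ else 0, ?_, ?_⟩
  · simp only [Finset.mem_map, Function.Embedding.coe_subtype]
    rintro _ ⟨i, -, rfl⟩
    simpa [i.2] using hf i
  · simp [Finsupp.sum]

theorem isOrtho_biSup_of_disjoint (horth : Pairwise fun i j => Hn i ⟂ Hn j) {A B : Set ι}
    (hAB : Disjoint A B) : (⨆ i ∈ A, Hn i) ⟂ (⨆ j ∈ B, Hn j) :=
  isOrtho_iSup_left.2 fun _ => isOrtho_iSup_left.2 fun hi =>
    isOrtho_iSup_right.2 fun _ => isOrtho_iSup_right.2 fun hj => horth (hAB.ne_of_mem hi hj)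

section Diagonal

variable {a : ι → 𝕜} {D : E →ₗ[𝕜] E}

theorem apply_mem_biSup_of_diagonal (hD : ∀ i, ∀ ξ ∈ Hn i, D ξ = a i • ξ) {A : Set ι} {x : E}
    (hx : x ∈ ⨆ i ∈ A, Hn i) : D x ∈ ⨆ i ∈ A, Hn i := by
  refine (iSup₂_le fun i hi ξ hξ => ?_ : (⨆ i ∈ A, Hn i) ≤ (⨆ i ∈ A, Hn i).comap D) hx
  rw [mem_comap, hD i ξ hξ]
  exact smul_mem _ _ (le_iSup₂ (f := fun i (_ : i ∈ A) => Hn i) i hi hξ)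

theorem norm_apply_sub_smul_le_of_mem_biSup (horth : Pairwise fun i j => Hn i ⟂ Hn j)
    (hD : ∀ i, ∀ ξ ∈ Hn i, D ξ = a i • ξ) {a₀ : 𝕜} {A : Set ι} {K : ℝ} (hK : 0 ≤ K)
    (ha : ∀ i ∈ A, ‖a i - a₀‖ ≤ K) {x : E} (hx : x ∈ ⨆ i ∈ A, Hn i) :
    ‖D x - a₀ • x‖ ≤ K * ‖x‖ := by
  obtain ⟨s, f, hf, rfl⟩ := exists_finset_sum_eq_of_mem_biSup hx
  have hsum : D (∑ i ∈ s, f i) - a₀ • ∑ i ∈ s, f i = ∑ i ∈ s, (a i - a₀) • f i := by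
    rw [map_sum, Finset.smul_sum, ← Finset.sum_sub_distrib]
    exact Finset.sum_congr rfl fun i hi => by rw [hD i _ (hf i hi).2, sub_smul]
  have hpairwise (g : ι → 𝕜) : (s : Set ι).Pairwise fun i j => ⟪g i • f i, g j • f j⟫_𝕜 = 0 :=
    fun i hi j hj hij => (horth hij).inner_eq (smul_mem _ _ (hf i hi).2) (smul_mem _ _ (hf j hj).2)
  rw [hsum]
  refine norm_sum_le_of_pairwise_inner_eq_zero subset_rfl hK (by simpa using hpairwise 1)
    (hpairwise _) fun i hi => ?_
  rw [norm_smul]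
  exact mul_le_mul_of_nonneg_right (ha i (hf i hi).1) (norm_nonneg _)

end Diagonal

theorem norm_apply_le_of_coloring (horth : Pairwise fun i j => Hn i ⟂ Hn j) {R : Type*}
    [Fintype R] (φ : ι → R) (B : ι → Set ι)
    (hB : ∀ m n, m ≠ n → φ m = φ n → Disjoint (B m) (B n)) (L : E →ₗ[𝕜] E)
    (hLB : ∀ n, ∀ x ∈ Hn n, L x ∈ ⨆ i ∈ B n, Hn i) {C : ℝ} (hC : 0 ≤ C)
    (hLC : ∀ n, ∀ x ∈ Hn n, ‖L x‖ ≤ C * ‖x‖) {x : E} (hx : x ∈ ⨆ n, Hn n) :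
    ‖L x‖ ≤ Fintype.card R * C * ‖x‖ := by
  classical
  obtain ⟨f, hf, rfl⟩ := (mem_iSup_iff_exists_finsupp _ _).mp hx
  have hcolor (r : R) : ‖∑ n ∈ f.support with φ n = r, L (f n)‖ ≤ C * ‖∑ n ∈ f.support, f n‖ :=
    norm_sum_le_of_pairwise_inner_eq_zero (Finset.filter_subset _ _) hC
      (fun m _ n _ hmn => (horth hmn).inner_eq (hf m) (hf n))
      (fun m hm n hn hmn => by
        simp only [Finset.coe_filter, Set.mem_ofPred_eq] at hm hn
        exact (isOrtho_biSup_of_disjoint horth (hB m n hmn (hm.2.trans hn.2.symm))).inner_eq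
          (hLB m _ (hf m)) (hLB n _ (hf n)))
      fun n _ => hLC n _ (hf n)
  calc ‖L (f.sum fun _ y => y)‖ = ‖∑ r, ∑ n ∈ f.support with φ n = r, L (f n)‖ := by
        rw [Finsupp.sum, map_sum, Finset.sum_fiberwise f.support φ]
    _ ≤ ∑ _r : R, C * ‖∑ n ∈ f.support, f n‖ :=
        (norm_sum_le _ _).trans (Finset.sum_le_sum fun r _ => hcolor r)
    _ = Fintype.card R * C * ‖f.sum fun _ y => y‖ := by
        rw [Finset.sum_const, nsmul_eq_mul, Finset.card_univ, mul_assoc, Finsupp.sum]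

end Submodule

theorem Nat.eq_of_modEq_of_abs_sub_le {d a b i : ℕ} (h : a ≡ b [MOD 2 * d + 1])
    (ha : |(i : ℤ) - a| ≤ d) (hb : |(i : ℤ) - b| ≤ d) : a = b :=
  h.eq_of_abs_lt (by rw [abs_le] at ha hb; rw [abs_lt]; push_cast; omega)

def near3Coloring (k n : ℕ × ℕ × ℕ) :
    ZMod (2 * k.1 + 1) × ZMod (2 * k.2.1 + 1) × ZMod (2 * k.2.2 + 1) :=
  (n.1, n.2.1, n.2.2)

theorem disjoint_near3_of_near3Coloring_eq {k m n : ℕ × ℕ × ℕ} (hmn : m ≠ n)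
    (h : near3Coloring k m = near3Coloring k n) :
    Disjoint {i | Near3 k i m} {i | Near3 k i n} := by
  refine Set.disjoint_left.2 fun i ⟨hm₁, hm₂, hm₃⟩ ⟨hn₁, hn₂, hn₃⟩ => hmn ?_
  simp only [near3Coloring, Prod.mk.injEq, ZMod.natCast_eq_natCast_iff] at h
  exact Prod.ext (Nat.eq_of_modEq_of_abs_sub_le h.1 hm₁ hn₁)
    (Prod.ext (Nat.eq_of_modEq_of_abs_sub_le h.2.1 hm₂ hn₂)
      (Nat.eq_of_modEq_of_abs_sub_le h.2.2 hm₃ hn₃))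

theorem stmt1_general
    {H : Type*} [NormedAddCommGroup H] [InnerProductSpace ℂ H] [CompleteSpace H]
    (Hn : ℕ × ℕ × ℕ → Submodule ℂ H)
    (horth : ∀ m n : ℕ × ℕ × ℕ, m ≠ n → ∀ x ∈ Hn m, ∀ y ∈ Hn n, ⟪x, y⟫ = 0)
    (hdense : Dense ((⨆ n, Hn n : Submodule ℂ H) : Set H))
    (c : ℕ × ℕ × ℕ → ℝ)
    (M : ℕ × ℕ × ℕ → ℝ)
    (hM : ∀ k : ℕ × ℕ × ℕ, 0 < M k ∧ ∀ i i' : ℕ × ℕ × ℕ, Near3 k i i' → |c i - c i'| ≤ M k)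
    (D : H →ₗ[ℂ] H)
    (hD : ∀ n : ℕ × ℕ × ℕ, ∀ ξ ∈ Hn n, D ξ = (c n : ℂ) • ξ)
    (T : H →L[ℂ] H) (k : ℕ × ℕ × ℕ)
    (hT : ∀ n : ℕ × ℕ × ℕ, ∀ ξ ∈ Hn n,
      T ξ ∈ (⨆ i ∈ {i : ℕ × ℕ × ℕ | Near3 k i n}, Hn i : Submodule ℂ H)) :
    (∀ n : ℕ × ℕ × ℕ, ∀ ξ ∈ Hn n, ‖D (T ξ) - T (D ξ)‖ ≤ M k * ‖T‖ * ‖ξ‖) ∧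
      ∃ S : H →L[ℂ] H, ∀ ξ ∈ (⨆ n, Hn n : Submodule ℂ H), S ξ = D (T ξ) - T (D ξ) := by
  have horth' : Pairwise fun m n => Hn m ⟂ Hn n := fun m n h =>
    isOrtho_iff_inner_eq.2 (horth m n h)
  obtain ⟨hMk, hcM⟩ := hM k
  set L : H →ₗ[ℂ] H := D ∘ₗ T.toLinearMap - T.toLinearMap ∘ₗ D with hL
  have hL_eq : ∀ n, ∀ ξ ∈ Hn n, L ξ = D (T ξ) - (c n : ℂ) • T ξ := fun n ξ hξ => by
    simp [hL, hD n ξ hξ]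
  have hbound : ∀ n, ∀ ξ ∈ Hn n, ‖L ξ‖ ≤ M k * ‖T‖ * ‖ξ‖ := fun n ξ hξ =>
    calc ‖L ξ‖ = ‖D (T ξ) - (c n : ℂ) • T ξ‖ := by rw [hL_eq n ξ hξ]
      _ ≤ M k * ‖T ξ‖ := norm_apply_sub_smul_le_of_mem_biSup horth' hD hMk.le
          (fun i hi => by rw [← Complex.ofReal_sub, Complex.norm_real]; exact hcM i n hi)
          (hT n ξ hξ)
      _ ≤ M k * ‖T‖ * ‖ξ‖ := by rw [mul_assoc]; gcongr; exact T.le_opNorm ξ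
  refine ⟨hbound, ?_⟩
  have hband : ∀ n, ∀ ξ ∈ Hn n, L ξ ∈ ⨆ i ∈ {i | Near3 k i n}, Hn i := fun n ξ hξ => by
    rw [hL_eq n ξ hξ]
    exact sub_mem (apply_mem_biSup_of_diagonal hD (hT n ξ hξ)) (smul_mem _ _ (hT n ξ hξ))
  exact L.exists_continuousLinearMap_eq_of_norm_le_on_dense hdense fun ξ hξ =>
    norm_apply_le_of_coloring horth' (near3Coloring k) _
      (fun _ _ => disjoint_near3_of_near3Coloring_eq) L hband (by positivity) hbound hξ

/-- The `ℕ³`-indexed version of the commutator-bound lemma: if `D` acts on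
`Hn n` by the scalar `c n`, where `c : ℕ³ → ℝ` satisfies `1 ≤ c`, is strictly monotone for the
componentwise order, and satisfies `|c i − c i'| ≤ M k` whenever `i, i'` are within band `k`,
and if the bounded operator `T` maps each `Hn n` into the sum of the `Hn i` with `i` within band
`k` of `n`, then `‖D(Tξ) − T(Dξ)‖ ≤ M k · ‖T‖ · ‖ξ‖` for `ξ ∈ Hn n`, and the commutator extends
to a bounded operator on `H`. -/
theorem stmt1
    {H : Type*} [NormedAddCommGroup H] [InnerProductSpace ℂ H] [CompleteSpace H]
    (Hn : ℕ × ℕ × ℕ → Submodule ℂ H)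
    (horth : ∀ m n : ℕ × ℕ × ℕ, m ≠ n → ∀ x ∈ Hn m, ∀ y ∈ Hn n, ⟪x, y⟫ = 0)
    (hfin : ∀ n, FiniteDimensional ℂ (Hn n))
    (hdense : Dense ((⨆ n, Hn n : Submodule ℂ H) : Set H))
    (c : ℕ × ℕ × ℕ → ℝ)
    (hc1 : ∀ i, 1 ≤ c i)
    (hcmono : ∀ i i' : ℕ × ℕ × ℕ, i ≤ i' → i ≠ i' → c i < c i')
    (M : ℕ × ℕ × ℕ → ℝ)
    (hM : ∀ k : ℕ × ℕ × ℕ, 0 < M k ∧ ∀ i i' : ℕ × ℕ × ℕ, Near3 k i i' → |c i - c i'| ≤ M k)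
    (D : H →ₗ[ℂ] H)
    (hD : ∀ n : ℕ × ℕ × ℕ, ∀ ξ ∈ Hn n, D ξ = (c n : ℂ) • ξ)
    (T : H →L[ℂ] H) (k : ℕ × ℕ × ℕ)
    (hT : ∀ n : ℕ × ℕ × ℕ, ∀ ξ ∈ Hn n,
      T ξ ∈ (⨆ i ∈ {i : ℕ × ℕ × ℕ | Near3 k i n}, Hn i : Submodule ℂ H)) :
    (∀ n : ℕ × ℕ × ℕ, ∀ ξ ∈ Hn n, ‖D (T ξ) - T (D ξ)‖ ≤ M k * ‖T‖ * ‖ξ‖) ∧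
      ∃ S : H →L[ℂ] H, ∀ ξ ∈ (⨆ n, Hn n : Submodule ℂ H), S ξ = D (T ξ) - T (D ξ) :=
  stmt1_general Hn horth hdense c M hM D hD T k hT
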